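/- arXiv:2402.11321 — 4 statements merged into one kernel-verified Lean document; each statement's English description precedes it below -/
import Mathlib

section
/- Let H be a separable Hilbert space and let u_1,...,u_n, v_1,...,v_n be vectors in H. Then the Hilbert–Schmidt norm of the operator ∑_{i=1}^n u_i ⊗ v_i is at most (∑_{i=1}^n ‖u_i‖²)^{1/2} times the square root of the operator norm of ∑_{j=1}^n v_j ⊗ v_j. -/
open scoped InnerProductSpace

/-- The rank-one operator `x ⊗ y : u ↦ ⟨y, u⟩ x` on a real Hilbert space. -/
noncomputable def rankOne {H : Type*} [NormedAddCommGroup H] [InnerProductSpace ℝ H]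
    (x y : H) : H →L[ℝ] H :=
  (innerSL ℝ y).smulRight x

/-- The Hilbert–Schmidt norm of an operator, computed with respect to a Hilbert basis
(for a separable Hilbert space, indexed by `ℕ`). -/
noncomputable def hsNorm {H : Type*} [NormedAddCommGroup H] [InnerProductSpace ℝ H]
    (b : HilbertBasis ℕ ℝ H) (T : H →L[ℝ] H) : ℝ :=
  Real.sqrt (∑' i : ℕ, ‖T (b i)‖ ^ 2)

/-!
Put `T = ∑ uᵢ ⊗ vᵢ`. Both `∑ₖ ‖T bₖ‖²` and `∑ₖ ‖T* bₖ‖²` equal `∑ᵢⱼ ⟪uᵢ, uⱼ⟫ ⟪vᵢ, vⱼ⟫`, so one may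
bound the latter. Here `T* bₖ = V cₖ` with `V c = ∑ cᵢ vᵢ` and `cₖ = (⟪uᵢ, bₖ⟫)ᵢ`; since
`V V* = ∑ vⱼ ⊗ vⱼ`, Cauchy–Schwarz gives `‖V c‖² ≤ ‖∑ vⱼ ⊗ vⱼ‖ ‖c‖²`, and by Parseval
`∑ₖ ‖cₖ‖² = ∑ᵢ ‖uᵢ‖²`.
-/

section

variable {H ι κ : Type*} [NormedAddCommGroup H] [InnerProductSpace ℝ H] [Fintype ι]

@[simp]
theorem rankOne_apply (x y z : H) : rankOne x y z = ⟪y, z⟫_ℝ • x := rfl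

theorem sum_rankOne_apply (u v : ι → H) (z : H) :
    (∑ i, rankOne (u i) (v i)) z = ∑ i, ⟪v i, z⟫_ℝ • u i := by
  simp only [sum_apply, rankOne_apply]

theorem inner_sum_rankOne_self_apply (v : ι → H) (z : H) :
    ⟪(∑ i, rankOne (v i) (v i)) z, z⟫_ℝ = ∑ i, ⟪v i, z⟫_ℝ ^ 2 := by
  simp only [sum_rankOne_apply, sum_inner, real_inner_smul_left, sq]

theorem norm_sum_smul_sq_le (v : ι → H) (c : ι → ℝ) :
    ‖∑ i, c i • v i‖ ^ 2 ≤ ‖∑ i, rankOne (v i) (v i)‖ * ∑ i, c i ^ 2 := by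
  set z := ∑ i, c i • v i
  set S := ∑ i, rankOne (v i) (v i)
  have hz : ‖z‖ ^ 2 = ∑ i, c i * ⟪v i, z⟫_ℝ := by
    rw [← real_inner_self_eq_norm_sq]
    simp only [z, sum_inner, real_inner_smul_left]
  have hSz : ∑ i, ⟪v i, z⟫_ℝ ^ 2 ≤ ‖S‖ * ‖z‖ ^ 2 := by
    rw [← inner_sum_rankOne_self_apply]
    calc ⟪S z, z⟫_ℝ ≤ ‖S z‖ * ‖z‖ := real_inner_le_norm _ _
      _ ≤ ‖S‖ * ‖z‖ * ‖z‖ := by gcongr; exact S.le_opNorm z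
      _ = ‖S‖ * ‖z‖ ^ 2 := by ring
  have hsq : ‖z‖ ^ 2 * ‖z‖ ^ 2 ≤ (‖S‖ * ∑ i, c i ^ 2) * ‖z‖ ^ 2 :=
    calc ‖z‖ ^ 2 * ‖z‖ ^ 2 = (∑ i, c i * ⟪v i, z⟫_ℝ) ^ 2 := by rw [hz, sq]
      _ ≤ (∑ i, c i ^ 2) * ∑ i, ⟪v i, z⟫_ℝ ^ 2 := Finset.sum_mul_sq_le_sq_mul_sq _ _ _
      _ ≤ (∑ i, c i ^ 2) * (‖S‖ * ‖z‖ ^ 2) := by gcongr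
      _ = (‖S‖ * ∑ i, c i ^ 2) * ‖z‖ ^ 2 := by ring
  have hc : 0 ≤ ‖S‖ * ∑ i, c i ^ 2 := by positivity
  nlinarith [sq_nonneg ‖z‖]

theorem HilbertBasis.hasSum_inner_sq (b : HilbertBasis κ ℝ H) (x : H) :
    HasSum (fun k => ⟪x, b k⟫_ℝ ^ 2) (‖x‖ ^ 2) := by
  simpa only [real_inner_comm x, ← sq, real_inner_self_eq_norm_sq] using
    b.hasSum_inner_mul_inner x x

theorem HilbertBasis.hasSum_norm_sum_inner_smul_sq (b : HilbertBasis κ ℝ H) (x y : ι → H) :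
    HasSum (fun k => ‖∑ i, ⟪x i, b k⟫_ℝ • y i‖ ^ 2)
      (∑ i, ∑ j, ⟪x i, x j⟫_ℝ * ⟪y i, y j⟫_ℝ) := by
  have hterm : ∀ k, ‖∑ i, ⟪x i, b k⟫_ℝ • y i‖ ^ 2
      = ∑ i, ∑ j, ⟪x i, b k⟫_ℝ * ⟪b k, x j⟫_ℝ * ⟪y i, y j⟫_ℝ := fun k => by
    simp only [← real_inner_self_eq_norm_sq, sum_inner, inner_sum, real_inner_smul_left,
      real_inner_smul_right, real_inner_comm (b k)]
    refine Finset.sum_congr rfl fun i _ => Finset.sum_congr rfl fun j _ => ?_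
    rw [real_inner_comm (y i)]
    ring
  simp only [hterm]
  exact hasSum_sum fun i _ => hasSum_sum fun j _ => (b.hasSum_inner_mul_inner _ _).mul_right _

end

theorem hsNorm_sum_rankOne_le_general {H : Type*} [NormedAddCommGroup H] [InnerProductSpace ℝ H]
    (b : HilbertBasis ℕ ℝ H) (n : ℕ) (u v : Fin n → H) :
    hsNorm b (∑ i, rankOne (u i) (v i)) ≤
      Real.sqrt (∑ i, ‖u i‖ ^ 2) * Real.sqrt ‖∑ j, rankOne (v j) (v j)‖ := by
  set S := ∑ j, rankOne (v j) (v j)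
  rw [hsNorm, ← Real.sqrt_mul (by positivity)]
  refine Real.sqrt_le_sqrt ?_
  simp only [sum_rankOne_apply]
  have hT := b.hasSum_norm_sum_inner_smul_sq v u
  have hTadj := b.hasSum_norm_sum_inner_smul_sq u v
  have hparseval := (hasSum_sum fun i (_ : i ∈ Finset.univ) => b.hasSum_inner_sq (u i)).mul_left ‖S‖
  rw [hT.tsum_eq, mul_comm]
  simpa only [mul_comm ⟪v _, v _⟫_ℝ] using
    hasSum_le (fun k => norm_sum_smul_sq_le v _) hTadj hparseval

/-- For vectors `u_1,…,u_n, v_1,…,v_n` in a separable Hilbert space,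
`‖∑ u_i ⊗ v_i‖₂ ≤ (∑ ‖u_i‖²)^{1/2} ‖∑ v_j ⊗ v_j‖^{1/2}`. -/
theorem hsNorm_sum_rankOne_le {H : Type*} [NormedAddCommGroup H] [InnerProductSpace ℝ H]
    [CompleteSpace H] (b : HilbertBasis ℕ ℝ H) (n : ℕ) (u v : Fin n → H) :
    hsNorm b (∑ i, rankOne (u i) (v i)) ≤
      Real.sqrt (∑ i, ‖u i‖ ^ 2) * Real.sqrt ‖∑ j, rankOne (v j) (v j)‖ :=
  hsNorm_sum_rankOne_le_general b n u v
end

section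
/- Let A and H be self-adjoint operators on a finite-dimensional Hilbert space and let f : ℝ → ℝ be continuously differentiable with Lipschitz derivative f'. Define R_f(A;H) := tr(f(A+H)) − tr(f(A)) − tr(f'(A)H). Then |R_f(A;H)| ≤ (Lip(f')/2) ‖H‖₂², where Lip(f') is the Lipschitz constant of f' and ‖·‖₂ is the Hilbert–Schmidt (Frobenius) norm. -/
/-!
Diagonalize `A = U diag(λ) Uᵀ` and `A + H = V diag(μ) Vᵀ` and put `wᵢⱼ = ((Uᵀ V)ᵢⱼ)²`.
The trace of a product `g(A) k(A + H)` is `∑ᵢⱼ wᵢⱼ g(λᵢ) k(μⱼ)`, so both the trace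
remainder and `‖H‖₂² = tr H²` (with `H = (A + H) - A`) become `w`-weighted sums over pairs of
eigenvalues: of the scalar remainders `f μⱼ - f λᵢ - f' λᵢ (μⱼ - λᵢ)` and of `(μⱼ - λᵢ)²`
respectively. As `w ≥ 0`, the scalar bound `|f y - f x - f' x (y - x)| ≤ (L / 2) (y - x)²` can
be applied term by term.
-/

open Matrix

/-- For a real symmetric matrix `A`, `matFun f A` is `f(A)` defined via the spectral
decomposition `f(A) = U diagonal (f ∘ eigenvalues) U*` (and junk value `0` if `A` is
not Hermitian). -/
noncomputable def matFun {d : ℕ} (f : ℝ → ℝ) (A : Matrix (Fin d) (Fin d) ℝ) :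
    Matrix (Fin d) (Fin d) ℝ :=
  if h : A.IsHermitian then
    (h.eigenvectorUnitary : Matrix (Fin d) (Fin d) ℝ) * Matrix.diagonal (f ∘ h.eigenvalues) *
      star (h.eigenvectorUnitary : Matrix (Fin d) (Fin d) ℝ)
  else 0

open intervalIntegral

theorem abs_taylor_remainder_le_of_le {f : ℝ → ℝ} {L : NNReal} (hf : Differentiable ℝ f)
    (hLip : LipschitzWith L (deriv f)) {a b : ℝ} (hab : a ≤ b) :
    |f b - f a - deriv f a * (b - a)| ≤ L / 2 * (b - a) ^ 2 := by
  have hrem : f b - f a - deriv f a * (b - a) = ∫ t in a..b, (deriv f t - deriv f a) := by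
    rw [integral_sub (hLip.continuous.intervalIntegrable a b) intervalIntegrable_const,
      integral_deriv_eq_sub (fun x _ => hf x) (hLip.continuous.intervalIntegrable a b),
      integral_const, smul_eq_mul, mul_comm]
  have hbound : ∀ t ∈ Set.Ioc a b, ‖deriv f t - deriv f a‖ ≤ L * (t - a) := fun t ht => by
    simpa [Real.dist_eq, abs_of_nonneg (sub_nonneg.2 ht.1.le)] using hLip.dist_le_mul t a
  calc |f b - f a - deriv f a * (b - a)|
      ≤ ∫ t in a..b, (L : ℝ) * (t - a) := by
        rw [hrem, ← Real.norm_eq_abs]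
        exact norm_integral_le_of_norm_le hab (.of_forall hbound)
          ((continuous_const.mul (continuous_id.sub continuous_const)).intervalIntegrable a b)
    _ = L / 2 * (b - a) ^ 2 := by
        rw [integral_comp_sub_right (fun t => (L : ℝ) * t), integral_const_mul, integral_id]
        ring

/-- The case `b < a` reduces to `a ≤ b` through `x ↦ f (-x)`, which leaves the remainder
unchanged. -/
theorem abs_taylor_remainder_le {f : ℝ → ℝ} {L : NNReal} (hf : Differentiable ℝ f)
    (hLip : LipschitzWith L (deriv f)) (a b : ℝ) :
    |f b - f a - deriv f a * (b - a)| ≤ L / 2 * (b - a) ^ 2 := by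
  rcases le_total a b with hab | hba
  · exact abs_taylor_remainder_le_of_le hf hLip hab
  · have hderiv : deriv (fun x => f (-x)) = fun x => -deriv f (-x) :=
      funext (deriv_comp_neg f)
    have hLip' : LipschitzWith L (deriv fun x => f (-x)) := by
      rw [hderiv, ← mul_one L]
      exact (hLip.comp LipschitzWith.id.neg).neg
    have := abs_taylor_remainder_le_of_le (f := fun x => f (-x)) (hf.comp differentiable_neg)
      hLip' (neg_le_neg hba)
    simp only [hderiv, neg_neg] at this
    convert this using 2 <;> ring

namespace Matrix.IsHermitian

variable {d : ℕ} {A B : Matrix (Fin d) (Fin d) ℝ}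

theorem matFun_eq (hA : A.IsHermitian) (g : ℝ → ℝ) :
    matFun g A = (hA.eigenvectorUnitary : Matrix (Fin d) (Fin d) ℝ) *
      diagonal (g ∘ hA.eigenvalues) * star (hA.eigenvectorUnitary : Matrix (Fin d) (Fin d) ℝ) :=
  dif_pos hA

theorem matFun_id (hA : A.IsHermitian) : matFun id A = A := by
  rw [hA.matFun_eq]
  conv_rhs => rw [hA.spectral_theorem]
  simp [Unitary.conjStarAlgAut_apply]

theorem matFun_one (hA : A.IsHermitian) : matFun 1 A = 1 := by
  rw [hA.matFun_eq]
  simp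

theorem matFun_mul_matFun (hA : A.IsHermitian) (g k : ℝ → ℝ) :
    matFun g A * matFun k A = matFun (g * k) A := by
  simp only [hA.matFun_eq, Matrix.mul_assoc,
    ← Matrix.mul_assoc (star _) (hA.eigenvectorUnitary : Matrix (Fin d) (Fin d) ℝ),
    Unitary.coe_star_mul_self, Matrix.one_mul, ← Matrix.mul_assoc (diagonal _),
    diagonal_mul_diagonal]
  rfl

/-- `eigenOverlap hA hB i j = ⟪uᵢ, vⱼ⟫²` for the eigenbases `u` of `A` and `v` of `B`; these
form a doubly stochastic matrix. -/
noncomputable def eigenOverlap (hA : A.IsHermitian) (hB : B.IsHermitian) (i j : Fin d) : ℝ :=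
  ((star (hA.eigenvectorUnitary : Matrix (Fin d) (Fin d) ℝ) * hB.eigenvectorUnitary) i j) ^ 2

theorem eigenOverlap_nonneg (hA : A.IsHermitian) (hB : B.IsHermitian) (i j : Fin d) :
    0 ≤ eigenOverlap hA hB i j :=
  sq_nonneg _

theorem trace_matFun_mul_matFun (hA : A.IsHermitian) (hB : B.IsHermitian) (g k : ℝ → ℝ) :
    (matFun g A * matFun k B).trace =
      ∑ i, ∑ j, eigenOverlap hA hB i j * g (hA.eigenvalues i) * k (hB.eigenvalues j) := by
  set M := star (hA.eigenvectorUnitary : Matrix (Fin d) (Fin d) ℝ) * hB.eigenvectorUnitary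
  have hconj : (matFun g A * matFun k B).trace =
      (diagonal (g ∘ hA.eigenvalues) * M * diagonal (k ∘ hB.eigenvalues) * star M).trace := by
    rw [hA.matFun_eq, hB.matFun_eq, star_mul, star_star]
    simp only [M, Matrix.mul_assoc]
    rw [trace_mul_comm]
    simp only [Matrix.mul_assoc]
  have hentry : ∀ i j, (diagonal (g ∘ hA.eigenvalues) * M * diagonal (k ∘ hB.eigenvalues)) i j =
      g (hA.eigenvalues i) * M i j * k (hB.eigenvalues j) := fun i j => by
    rw [mul_diagonal, diagonal_mul]
    rfl
  rw [hconj]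
  simp only [trace, diag_apply, mul_apply (N := star M), hentry, star_apply, star_trivial]
  refine Finset.sum_congr rfl fun i _ => Finset.sum_congr rfl fun j _ => ?_
  simp only [eigenOverlap]
  ring

theorem trace_sub_sub_trace_mul_sub (hA : A.IsHermitian) (hB : B.IsHermitian) (f g : ℝ → ℝ) :
    (matFun f B).trace - (matFun f A).trace - (matFun g A * (B - A)).trace =
      ∑ i, ∑ j, eigenOverlap hA hB i j * (f (hB.eigenvalues j) - f (hA.eigenvalues i) -
        g (hA.eigenvalues i) * (hB.eigenvalues j - hA.eigenvalues i)) := by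
  have hfB : matFun f B = matFun 1 A * matFun f B := by rw [hA.matFun_one, Matrix.one_mul]
  have hfA : matFun f A = matFun f A * matFun 1 B := by rw [hB.matFun_one, Matrix.mul_one]
  have hgB : matFun g A * B = matFun g A * matFun id B := by rw [hB.matFun_id]
  have hgA : matFun g A * A = matFun (g * id) A * matFun 1 B := by
    rw [hB.matFun_one, Matrix.mul_one, ← hA.matFun_mul_matFun, hA.matFun_id]
  rw [Matrix.mul_sub, trace_sub, hgA, hgB, hfB, hfA]
  simp only [trace_matFun_mul_matFun hA hB, ← Finset.sum_sub_distrib]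
  refine Finset.sum_congr rfl fun i _ => Finset.sum_congr rfl fun j _ => ?_
  simp only [Pi.one_apply, Pi.mul_apply, id]
  ring

theorem sum_sq_sub_eq (hA : A.IsHermitian) (hB : B.IsHermitian) :
    ∑ i, ∑ j, (B - A) i j ^ 2 =
      ∑ i, ∑ j, eigenOverlap hA hB i j * (hB.eigenvalues j - hA.eigenvalues i) ^ 2 := by
  have hsymm : ∀ i j, (B - A) j i = (B - A) i j := fun i j => by
    simpa using congrFun (congrFun (hB.sub hA) i) j
  have hBB : B * B = matFun 1 A * matFun (id * id) B := by
    rw [hA.matFun_one, Matrix.one_mul, ← hB.matFun_mul_matFun, hB.matFun_id]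
  have hAA : A * A = matFun (id * id) A * matFun 1 B := by
    rw [hB.matFun_one, Matrix.mul_one, ← hA.matFun_mul_matFun, hA.matFun_id]
  have hAB : A * B = matFun id A * matFun id B := by rw [hA.matFun_id, hB.matFun_id]
  calc ∑ i, ∑ j, (B - A) i j ^ 2 = ((B - A) * (B - A)).trace := by
        simp only [trace, diag_apply, mul_apply, sq, hsymm]
    _ = (B * B).trace - 2 * (A * B).trace + (A * A).trace := by
        rw [Matrix.sub_mul, Matrix.mul_sub, Matrix.mul_sub, trace_sub, trace_sub, trace_sub,
          trace_mul_comm B A]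
        ring
    _ = _ := by
        rw [hBB, hAA, hAB]
        simp only [trace_matFun_mul_matFun hA hB, Finset.mul_sum, ← Finset.sum_sub_distrib,
          ← Finset.sum_add_distrib]
        refine Finset.sum_congr rfl fun i _ => Finset.sum_congr rfl fun j _ => ?_
        simp only [Pi.one_apply, Pi.mul_apply, id]
        ring

end Matrix.IsHermitian

/-- For self-adjoint `A, H` on a finite-dimensional Hilbert space and
`f ∈ C¹` with Lipschitz derivative, the first-order Taylor remainder
`R_f(A;H) = tr f(A+H) − tr f(A) − tr (f'(A) H)` satisfies
`|R_f(A;H)| ≤ (Lip(f')/2) ‖H‖₂²`. -/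
theorem abs_trace_taylor_remainder_le {d : ℕ} (A H : Matrix (Fin d) (Fin d) ℝ)
    (hA : A.IsHermitian) (hH : H.IsHermitian) (f : ℝ → ℝ) (L : NNReal)
    (hf : ContDiff ℝ 1 f) (hLip : LipschitzWith L (deriv f)) :
    |(matFun f (A + H)).trace - (matFun f A).trace - (matFun (deriv f) A * H).trace| ≤
      (L : ℝ) / 2 * ∑ i, ∑ j, (H i j) ^ 2 := by
  have hB := hA.add hH
  have hrem := hA.trace_sub_sub_trace_mul_sub hB f (deriv f)
  have hfrob := hA.sum_sq_sub_eq hB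
  rw [add_sub_cancel_left] at hrem hfrob
  rw [hrem, hfrob, Finset.mul_sum]
  refine (Finset.abs_sum_le_sum_abs _ _).trans (Finset.sum_le_sum fun i _ => ?_)
  rw [Finset.mul_sum]
  refine (Finset.abs_sum_le_sum_abs _ _).trans (Finset.sum_le_sum fun j _ => ?_)
  rw [abs_mul, abs_of_nonneg (hA.eigenOverlap_nonneg hB i j), mul_left_comm]
  exact mul_le_mul_of_nonneg_left
    (abs_taylor_remainder_le (hf.differentiable one_ne_zero) hLip _ _)
    (hA.eigenOverlap_nonneg hB i j)
end

section
/- Let A be a self-adjoint operator on a finite-dimensional Hilbert space, H a self-adjoint operator, and f : ℝ → ℝ continuously differentiable. Then the derivative at t = 0 of the function t ↦ tr(f(A + tH)) equals tr(f'(A) H). -/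
open Matrix

/-!
For a polynomial `p` the derivative is a computation: by cyclicity of the trace,
`d/dt tr (A + tH)^n = n tr ((A + tH)^(n-1) H)`, so `d/dt tr p(A + tH) = tr (p'(A + tH) H)`.
For `|t| < 1` the spectra of `A + tH` lie in `[-R, R]` with `R = ‖A‖ + ‖H‖`. Approximating `f'`
uniformly on `[-R, R]` by polynomials (Weierstrass) and integrating gives polynomials `p_n` with
`p_n → f` and `p_n' → f'` uniformly there. Since the functional calculus is isometric,
`‖g(X)‖ ≤ sup_{σ(X)} |g|`, so `tr p_n(A + tH) → tr f(A + tH)` and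
`tr (p_n'(A + tH) H) → tr (f'(A + tH) H)` uniformly in `t`, and uniform convergence of the
derivatives lets the derivative pass to the limit.
-/

open Polynomial Set Filter Topology

lemma tendstoUniformlyOn_of_dist_le {ι α β : Type*} [PseudoMetricSpace β] {l : Filter ι}
    {F : ι → α → β} {f : α → β} {s : Set α} {u : ι → ℝ} (hu : Tendsto u l (𝓝 0))
    (h : ∀ᶠ i in l, ∀ x ∈ s, dist (f x) (F i x) ≤ u i) : TendstoUniformlyOn F f l s := by
  rw [Metric.tendstoUniformlyOn_iff]
  intro ε hε
  filter_upwards [h, hu (Iio_mem_nhds hε)] with i hi hui x hx using (hi x hx).trans_lt hui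

lemma Polynomial.exists_derivative_eq {K : Type*} [Field K] [CharZero K] (q : K[X]) :
    ∃ p : K[X], derivative p = q := by
  induction q using Polynomial.induction_on' with
  | add q r hq hr =>
    obtain ⟨p, rfl⟩ := hq
    obtain ⟨p', rfl⟩ := hr
    exact ⟨p + p', derivative_add⟩
  | monomial n c =>
    refine ⟨monomial (n + 1) (c / (n + 1)), ?_⟩
    rw [derivative_monomial, Nat.add_sub_cancel]
    congr 1
    push_cast
    field_simp

theorem exists_polynomial_tendstoUniformlyOn_of_contDiff {f : ℝ → ℝ} (hf : ContDiff ℝ 1 f)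
    (a b : ℝ) :
    ∃ P : ℕ → ℝ[X], TendstoUniformlyOn (fun n x => (P n).eval x) f atTop (Icc a b) ∧
      TendstoUniformlyOn (fun n x => (derivative (P n)).eval x) (deriv f) atTop (Icc a b) := by
  choose q hq using fun n : ℕ => exists_polynomial_near_of_continuousOn a b (deriv f)
    (hf.continuous_deriv le_rfl).continuousOn (1 / (n + 1)) Nat.one_div_pos_of_nat
  choose p hp using fun n => (q n).exists_derivative_eq
  set P : ℕ → ℝ[X] := fun n => p n + C (f a - (p n).eval a)
  have hPa (n : ℕ) : (P n).eval a = f a := by simp [P]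
  have hP' (n : ℕ) : derivative (P n) = q n := by simp [P, hp]
  have hder (n : ℕ) : ∀ x ∈ Icc a b, dist (deriv f x) ((derivative (P n)).eval x) ≤ 1 / (n + 1) :=
    fun x hx => by rw [Real.dist_eq, hP', abs_sub_comm]; exact (hq n x hx).le
  have hval (n : ℕ) : ∀ x ∈ Icc a b, dist (f x) ((P n).eval x) ≤ 1 / (n + 1) * (b - a) := by
    intro x hx
    have hderiv (y : ℝ) : HasDerivAt (fun x => f x - (P n).eval x)
        (deriv f y - (derivative (P n)).eval y) y :=
      (hf.differentiable one_ne_zero).differentiableAt.hasDerivAt.sub ((P n).hasDerivAt y)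
    have := norm_image_sub_le_of_norm_deriv_le_segment' (fun y _ => (hderiv y).hasDerivWithinAt)
      (fun y hy => hder n y (Ico_subset_Icc_self hy)) x hx
    rw [hPa, sub_self, sub_zero, ← dist_eq_norm] at this
    exact this.trans (mul_le_mul_of_nonneg_left (by linarith [hx.2]) Nat.one_div_pos_of_nat.le)
  have hlim : Tendsto (fun n : ℕ => 1 / ((n : ℝ) + 1)) atTop (𝓝 0) :=
    tendsto_one_div_add_atTop_nhds_zero_nat
  exact ⟨P, tendstoUniformlyOn_of_dist_le (by simpa using hlim.mul_const (b - a)) (.of_forall hval),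
    tendstoUniformlyOn_of_dist_le hlim (.of_forall hder)⟩

section Tracial

variable {𝕜 A : Type*} [NontriviallyNormedField 𝕜] [NormedRing A] [NormedAlgebra 𝕜 A]
  (τ : A →L[𝕜] 𝕜)

lemma hasDerivAt_tracial_pow_add_smul (hτ : ∀ x y, τ (x * y) = τ (y * x)) (a h : A) (n : ℕ)
    (t : 𝕜) :
    HasDerivAt (fun t : 𝕜 => τ ((a + t • h) ^ n)) (n * τ ((a + t • h) ^ (n - 1) * h)) t := by
  have hline : HasDerivAt (fun t : 𝕜 => a + t • h) h t := by
    simpa using ((hasDerivAt_id t).smul_const h).const_add a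
  refine (τ.hasFDerivAt.comp_hasDerivAt t (hline.fun_pow' n)).congr_deriv ?_
  have hcycle : ∀ i ∈ Finset.range n,
      τ ((a + t • h) ^ (n.pred - i) * h * (a + t • h) ^ i) = τ ((a + t • h) ^ (n - 1) * h) := by
    intro i hi
    rw [hτ, ← mul_assoc, ← pow_add, Nat.pred_eq_sub_one, Nat.add_sub_cancel' (by
      have := Finset.mem_range.1 hi; omega)]
  rw [map_sum, Finset.sum_congr rfl hcycle, Finset.sum_const, Finset.card_range, nsmul_eq_mul]

lemma hasDerivAt_tracial_aeval_add_smul (hτ : ∀ x y, τ (x * y) = τ (y * x)) (p : 𝕜[X]) (a h : A)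
    (t : 𝕜) :
    HasDerivAt (fun t : 𝕜 => τ (aeval (a + t • h) p))
      (τ (aeval (a + t • h) (derivative p) * h)) t := by
  induction p using Polynomial.induction_on' with
  | add p q hp hq =>
    simp only [map_add, add_mul]
    exact hp.add hq
  | monomial n c =>
    simp only [aeval_monomial, derivative_monomial, ← Algebra.smul_def, smul_mul_assoc, map_smul]
    refine ((hasDerivAt_tracial_pow_add_smul τ hτ a h n t).const_mul c).congr_deriv ?_
    rw [smul_eq_mul, mul_assoc]

end Tracial

section CFC

variable {A : Type*} [NormedRing A] [StarRing A] [NormedAlgebra ℝ A]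
  [IsometricContinuousFunctionalCalculus ℝ A IsSelfAdjoint]

lemma IsSelfAdjoint.spectrum_subset_Icc {a : A} (ha : IsSelfAdjoint a) :
    spectrum ℝ a ⊆ Icc (-‖a‖) ‖a‖ := fun x hx => by
  rw [mem_Icc, ← abs_le, ← Real.norm_eq_abs]
  simpa [cfc_id ℝ a] using norm_apply_le_norm_cfc id a hx

lemma tendstoUniformlyOn_cfc {ι : Type*} {l : Filter ι} {F : ι → ℝ → ℝ} {g : ℝ → ℝ}
    {s : Set ℝ} (hF : TendstoUniformlyOn F g l s) (hFc : ∀ i, ContinuousOn (F i) s)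
    (hg : ContinuousOn g s) :
    TendstoUniformlyOn (fun i a => cfc (F i) a) (cfc g) l {a : A | spectrum ℝ a ⊆ s} := by
  rw [Metric.tendstoUniformlyOn_iff] at hF ⊢
  intro ε hε
  filter_upwards [hF (ε / 2) (half_pos hε)] with i hi a ha
  rw [dist_eq_norm, ← cfc_sub g (F i) a (hg.mono ha) ((hFc i).mono ha)]
  refine (norm_cfc_le (half_pos hε).le fun x hx => ?_).trans_lt (half_lt_self hε)
  exact (hi x (ha hx)).le

theorem hasDerivAt_tracial_cfc_add_smul [StarModule ℝ A] (τ : A →L[ℝ] ℝ)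
    (hτ : ∀ x y, τ (x * y) = τ (y * x))
    {a h : A} (ha : IsSelfAdjoint a) (hh : IsSelfAdjoint h) {f : ℝ → ℝ} (hf : ContDiff ℝ 1 f) :
    HasDerivAt (fun t : ℝ => τ (cfc f (a + t • h))) (τ (cfc (deriv f) a * h)) 0 := by
  set R := ‖a‖ + ‖h‖
  have hsa (t : ℝ) : IsSelfAdjoint (a + t • h) := ha.add ((IsSelfAdjoint.all t).smul hh)
  have hσ : Ioo (-1 : ℝ) 1 ⊆
      (fun t : ℝ => a + t • h) ⁻¹' {b : A | spectrum ℝ b ⊆ Icc (-R) R} := by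
    intro t ht
    have hnorm : ‖a + t • h‖ ≤ R := by
      refine (norm_add_le _ _).trans (add_le_add_right ?_ _)
      rw [norm_smul]
      exact mul_le_of_le_one_left (norm_nonneg h) (abs_le.2 ⟨ht.1.le, ht.2.le⟩)
    exact (hsa t).spectrum_subset_Icc.trans (Icc_subset_Icc (neg_le_neg hnorm) hnorm)
  have htendsto (L : A →L[ℝ] ℝ) {Q : ℕ → ℝ[X]} {g : ℝ → ℝ}
      (hQ : TendstoUniformlyOn (fun n x => (Q n).eval x) g atTop (Icc (-R) R))
      (hg : Continuous g) :
      TendstoUniformlyOn (fun n t => L (aeval (a + t • h) (Q n))) (fun t => L (cfc g (a + t • h)))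
        atTop (Ioo (-1 : ℝ) 1) := by
    refine (L.uniformContinuous.comp_tendstoUniformlyOn
      (((tendstoUniformlyOn_cfc hQ (fun n => (Q n).continuousOn) hg.continuousOn).comp
        (fun t : ℝ => a + t • h)).mono hσ)).congr (.of_forall fun n t _ => ?_)
    simp only [Function.comp_apply, cfc_polynomial (Q n) (a + t • h) (hsa t)]
  obtain ⟨P, hP, hP'⟩ := exists_polynomial_tendstoUniformlyOn_of_contDiff hf (-R) R
  simpa using hasDerivAt_of_tendstoUniformlyOn isOpen_Ioo
    (htendsto (τ.comp ((ContinuousLinearMap.mul ℝ A).flip h)) hP' (hf.continuous_deriv le_rfl))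
    (.of_forall fun n t _ => hasDerivAt_tracial_aeval_add_smul τ hτ (P n) a h t)
    (fun t ht => (htendsto τ hP hf.continuous).tendsto_at ht) (by norm_num : (0 : ℝ) ∈ Ioo (-1) 1)

end CFC

lemma matFun_eq_cfc {d : ℕ} (f : ℝ → ℝ) {M : Matrix (Fin d) (Fin d) ℝ} (hM : M.IsHermitian) :
    matFun f M = cfc f M := by
  rw [matFun, dif_pos hM, hM.cfc_eq, IsHermitian.cfc, Unitary.conjStarAlgAut_apply,
    RCLike.ofReal_real_eq_id, Function.id_comp]

/-- For self-adjoint `A, H` on a finite-dimensional Hilbert space and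
continuously differentiable `f : ℝ → ℝ`, the derivative at `t = 0` of
`t ↦ tr f(A + tH)` equals `tr (f'(A) H)`. -/
theorem hasDerivAt_trace_matFun {d : ℕ} (A H : Matrix (Fin d) (Fin d) ℝ)
    (hA : A.IsHermitian) (hH : H.IsHermitian) (f : ℝ → ℝ) (hf : ContDiff ℝ 1 f) :
    HasDerivAt (fun t : ℝ => (matFun f (A + t • H)).trace)
      ((matFun (deriv f) A * H).trace) 0 := by
  have hAt (t : ℝ) : (A + t • H).IsHermitian :=
    hA.isSelfAdjoint.add ((IsSelfAdjoint.all t).smul hH.isSelfAdjoint)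
  simp_rw [matFun_eq_cfc _ (hAt _), matFun_eq_cfc _ hA]
  -- Real matrices carry an isometric functional calculus for the L² operator norm.
  open scoped Matrix.Norms.L2Operator in
  exact hasDerivAt_tracial_cfc_add_smul (traceLinearMap (Fin d) ℝ ℝ).toContinuousLinearMap
    trace_mul_comm hA.isSelfAdjoint hH.isSelfAdjoint hf
end

section
/- Let X_1,...,X_n be i.i.d. centered Gaussian vectors with covariance Σ in ℝ^d and sample covariance Σ̂_n. Then E ‖Σ̂_n − Σ‖₂² ≤ E‖X‖⁴ / n, and consequently E^{1/2} ‖Σ̂_n − Σ‖₂² ≤ C ‖Σ‖ · r(Σ)/√n for a universal constant C, where r(Σ) = tr(Σ)/‖Σ‖ is the effective rank. -/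
/-!
Each entry of `Σ̂_n - Σ` is the average of the `n` i.i.d. centred variables `X_i X_j - Σ_ij`,
so its second moment is `Var(X_i X_j) / n ≤ E (X_i X_j)² / n`; summing over `i, j` gives
`E ‖X‖⁴ / n`. For the second bound, `gaussianVec Σ` is Mathlib's `multivariateGaussian 0 Σ`,
whose coordinates are `N(0, Σ_ii)`. The fourth moment `E X_i⁴ = 3 Σ_ii²` is the fourth
derivative at `0` of the moment generating function `exp (Σ_ii t² / 2)`, and Cauchy–Schwarz gives
`E X_i² X_j² ≤ 3 Σ_ii Σ_jj`, hence `E ‖X‖⁴ ≤ 3 tr(Σ)²` and `C = √3`.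
-/

open MeasureTheory ProbabilityTheory Matrix

/-- The standard Gaussian measure on `ℝ^d`. -/
noncomputable def stdGaussian (d : ℕ) : Measure (Fin d → ℝ) :=
  Measure.pi fun _ => gaussianReal 0 1

/-- The square root of a positive semidefinite matrix (Mathlib's former `Matrix.PosSemidef.sqrt`). -/
noncomputable def Matrix.PosSemidef.sqrt {n : Type*} [Fintype n] [DecidableEq n]
    {A : Matrix n n ℝ} (hA : A.PosSemidef) : Matrix n n ℝ :=
  hA.1.eigenvectorUnitary.1 * diagonal ((↑) ∘ (fun x : ℝ => Real.sqrt x) ∘ hA.1.eigenvalues) *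
    (star hA.1.eigenvectorUnitary : Matrix n n ℝ)

/-- The centered Gaussian measure `N(0, S)` on `ℝ^d`, realized as the image of the standard
Gaussian under `z ↦ S^{1/2} z`. -/
noncomputable def gaussianVec {d : ℕ} (S : Matrix (Fin d) (Fin d) ℝ) (hS : S.PosSemidef) :
    Measure (Fin d → ℝ) :=
  Measure.map (fun z => hS.sqrt.mulVec z) (stdGaussian d)

/-- The (ℓ²→ℓ²) operator norm of a real matrix. -/
noncomputable def matOpNorm {d : ℕ} (M : Matrix (Fin d) (Fin d) ℝ) : ℝ :=
  ‖Matrix.toEuclideanCLM (𝕜 := ℝ) M‖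

/-- The effective rank `r(S) = tr(S)/‖S‖`. -/
noncomputable def effRank {d : ℕ} (S : Matrix (Fin d) (Fin d) ℝ) : ℝ :=
  S.trace / matOpNorm S

/-- The Euclidean norm of a vector in `ℝ^d`. -/
noncomputable def vecNorm {d : ℕ} (x : Fin d → ℝ) : ℝ :=
  Real.sqrt (∑ j, (x j) ^ 2)

/-- The sample covariance matrix `n⁻¹ ∑_i X_i X_iᵀ`. -/
noncomputable def sampleCov {d n : ℕ} (X : Fin n → Fin d → ℝ) : Matrix (Fin d) (Fin d) ℝ :=
  (n : ℝ)⁻¹ • ∑ i, Matrix.vecMulVec (X i) (X i)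

open Real WithLp
open scoped NNReal ENNReal MatrixOrder

theorem Matrix.PosSemidef.sqrt_eq_cfcSqrt {n : Type*} [Fintype n] [DecidableEq n]
    {A : Matrix n n ℝ} (hA : A.PosSemidef) : hA.sqrt = CFC.sqrt A := by
  rw [CFC.sqrt_eq_real_sqrt A hA.nonneg, cfcₙ_eq_cfc, hA.1.cfc_eq, IsHermitian.cfc,
    Unitary.conjStarAlgAut_apply, Matrix.PosSemidef.sqrt]
  rfl

theorem gaussianVec_eq_map_multivariateGaussian {d : ℕ} {S : Matrix (Fin d) (Fin d) ℝ}
    (hS : S.PosSemidef) :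
    gaussianVec S hS = (multivariateGaussian 0 S).map ofLp := by
  have hpi : _root_.stdGaussian d =
      (ProbabilityTheory.stdGaussian (EuclideanSpace ℝ (Fin d))).map ofLp := by
    rw [← map_pi_eq_stdGaussian, Measure.map_map (by fun_prop) (by fun_prop)]
    exact (Measure.map_id).symm
  rw [gaussianVec, multivariateGaussian, hpi, Measure.map_map (by fun_prop) (by fun_prop),
    Measure.map_map (by fun_prop) (by fun_prop), hS.sqrt_eq_cfcSqrt]
  congr 1
  ext x : 1
  simp

theorem deriv_mul_exp_half_sq (v : ℝ) {P P' Q : ℝ → ℝ} (hP : ∀ t, HasDerivAt P (P' t) t)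
    (hQ : ∀ t, P' t + v * t * P t = Q t) :
    deriv (fun s => P s * rexp (v * s ^ 2 / 2)) = fun t => Q t * rexp (v * t ^ 2 / 2) := by
  ext t
  have hE : HasDerivAt (fun s => rexp (v * s ^ 2 / 2)) (rexp (v * t ^ 2 / 2) * (v * t)) t := by
    have := (((hasDerivAt_pow 2 t).const_mul v).div_const 2).exp
    exact this.congr_deriv (by push_cast; ring)
  exact ((hP t).mul hE).deriv.trans (by rw [← hQ]; ring)

theorem integral_pow_four_gaussianReal (v : ℝ≥0) :
    ∫ x, x ^ 4 ∂(gaussianReal 0 v) = 3 * (v : ℝ) ^ 2 := by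
  have h := iteratedDeriv_mgf_zero (X := id) (μ := gaussianReal 0 v)
    (by simp [integrableExpSet_id_gaussianReal]) 4
  set w : ℝ := (v : ℝ) with hw
  have hmgf : mgf id (gaussianReal 0 v) = fun t => (fun _ => 1) t * rexp (w * t ^ 2 / 2) := by
    simp [mgf_id_gaussianReal, hw]
  rw [hmgf, iteratedDeriv_succ', iteratedDeriv_succ', iteratedDeriv_succ', iteratedDeriv_one,
    deriv_mul_exp_half_sq w (fun t => hasDerivAt_const t 1) (Q := fun t => w * t) (by simp),
    deriv_mul_exp_half_sq w (fun t => (hasDerivAt_id' t).const_mul w)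
      (Q := fun t => w + w ^ 2 * t ^ 2) (fun t => by ring),
    deriv_mul_exp_half_sq w (fun t => ((hasDerivAt_pow 2 t).const_mul (w ^ 2)).const_add w)
      (Q := fun t => 3 * w ^ 2 * t + w ^ 3 * t ^ 3) (fun t => by norm_num; ring),
    deriv_mul_exp_half_sq w (fun t => ((hasDerivAt_id' t).const_mul (3 * w ^ 2)).fun_add
        ((hasDerivAt_pow 3 t).const_mul (w ^ 3)))
      (Q := fun t => 3 * w ^ 2 + 6 * w ^ 3 * t ^ 2 + w ^ 4 * t ^ 4)
      (fun t => by norm_num; ring)] at h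
  simpa using h.symm

theorem integral_mul_le_sqrt_mul_sqrt {α : Type*} [MeasurableSpace α] {μ : Measure α}
    {f g : α → ℝ} (hf : MemLp f 2 μ) (hg : MemLp g 2 μ) (hf0 : 0 ≤ f) (hg0 : 0 ≤ g) :
    ∫ a, f a * g a ∂μ ≤ √(∫ a, f a ^ 2 ∂μ) * √(∫ a, g a ^ 2 ∂μ) := by
  have := integral_mul_le_Lp_mul_Lq_of_nonneg (μ := μ) Real.HolderConjugate.two_two
    (Filter.Eventually.of_forall hf0) (Filter.Eventually.of_forall hg0)
    (by simpa using hf) (by simpa using hg)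
  simpa [Real.sqrt_eq_rpow] using this

theorem measurable_vecNorm {d : ℕ} : Measurable (vecNorm (d := d)) :=
  Measurable.sqrt (by fun_prop)

theorem vecNorm_pow_four {d : ℕ} (x : Fin d → ℝ) :
    vecNorm x ^ 4 = ∑ i, ∑ j, (x i * x j) ^ 2 := by
  rw [vecNorm, show 4 = 2 * 2 by rfl, pow_mul, sq_sqrt (by positivity), sq, Finset.sum_mul_sum]
  simp_rw [mul_pow]

section GaussianVec

variable {d : ℕ} {S : Matrix (Fin d) (Fin d) ℝ} (hS : S.PosSemidef)

instance isProbabilityMeasure_gaussianVec : IsProbabilityMeasure (gaussianVec S hS) := by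
  rw [gaussianVec_eq_map_multivariateGaussian]
  exact Measure.isProbabilityMeasure_map (by fun_prop)

theorem measurePreserving_eval_gaussianVec (i : Fin d) :
    MeasurePreserving (fun x : Fin d → ℝ => x i) (gaussianVec S hS)
      (gaussianReal 0 (S i i).toNNReal) := by
  refine ⟨measurable_pi_apply i, ?_⟩
  rw [gaussianVec_eq_map_multivariateGaussian, Measure.map_map (by fun_prop) (by fun_prop)]
  exact (measurePreserving_eval_multivariateGaussian hS).map_eq

theorem memLp_eval_gaussianVec {p : ℝ≥0∞} (hp : p ≠ ∞) (i : Fin d) :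
    MemLp (fun x : Fin d → ℝ => x i) p (gaussianVec S hS) := by
  lift p to ℝ≥0 using hp
  exact (memLp_id_gaussianReal p).comp_measurePreserving (measurePreserving_eval_gaussianVec hS i)

theorem memLp_eval_mul_eval_gaussianVec (i j : Fin d) :
    MemLp (fun x : Fin d → ℝ => x i * x j) 2 (gaussianVec S hS) := by
  have : ENNReal.HolderTriple 4 4 2 := ⟨by
    rw [← two_mul, show (4 : ℝ≥0∞) = 2 * 2 by norm_num, ENNReal.mul_inv (by simp) (by simp),
      ← mul_assoc, ENNReal.mul_inv_cancel (by simp) (by simp), one_mul]⟩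
  exact (memLp_eval_gaussianVec hS (p := 4) (by simp) j).mul
    (memLp_eval_gaussianVec hS (p := 4) (by simp) i)

theorem integral_comp_eval_gaussianVec (i : Fin d) {g : ℝ → ℝ} (hg : Measurable g) :
    ∫ x, g (x i) ∂(gaussianVec S hS) = ∫ y, g y ∂(gaussianReal 0 (S i i).toNNReal) := by
  rw [← (measurePreserving_eval_gaussianVec hS i).map_eq,
    integral_map (measurable_pi_apply i).aemeasurable hg.aestronglyMeasurable]

theorem integral_eval_gaussianVec (i : Fin d) : ∫ x, x i ∂(gaussianVec S hS) = 0 := by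
  rw [integral_comp_eval_gaussianVec hS i measurable_id', integral_id_gaussianReal]

theorem integral_eval_pow_four_gaussianVec (i : Fin d) :
    ∫ x, x i ^ 4 ∂(gaussianVec S hS) = 3 * S i i ^ 2 := by
  rw [integral_comp_eval_gaussianVec hS i (g := (· ^ 4)) (by fun_prop),
    integral_pow_four_gaussianReal, Real.coe_toNNReal _ hS.diag_nonneg]

theorem integral_eval_mul_eval_gaussianVec (i j : Fin d) :
    ∫ x, x i * x j ∂(gaussianVec S hS) = S i j := by
  have hcov : cov[fun x => x i, fun x => x j; gaussianVec S hS] = S i j := by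
    rw [gaussianVec_eq_map_multivariateGaussian,
      covariance_map_fun (measurable_pi_apply i).aestronglyMeasurable
        (measurable_pi_apply j).aestronglyMeasurable (by fun_prop)]
    exact covariance_eval_multivariateGaussian hS i j
  rw [covariance_eq_sub (memLp_eval_gaussianVec hS (by simp) i)
    (memLp_eval_gaussianVec hS (by simp) j),
    integral_eval_gaussianVec, integral_eval_gaussianVec] at hcov
  simpa using hcov

theorem integral_sq_eval_mul_eval_gaussianVec_le (i j : Fin d) :
    ∫ x, (x i * x j) ^ 2 ∂(gaussianVec S hS) ≤ 3 * (S i i * S j j) := by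
  have hsq (k : Fin d) : √(∫ x, (x k * x k) ^ 2 ∂(gaussianVec S hS)) = √3 * S k k := by
    simp_rw [← pow_two, ← pow_mul]
    rw [integral_eval_pow_four_gaussianVec, sqrt_mul (by norm_num), sqrt_sq hS.diag_nonneg]
  calc ∫ x, (x i * x j) ^ 2 ∂(gaussianVec S hS)
      = ∫ x, (x i * x i) * (x j * x j) ∂(gaussianVec S hS) := by simp_rw [mul_pow, sq]
    _ ≤ √(∫ x, (x i * x i) ^ 2 ∂(gaussianVec S hS)) *
          √(∫ x, (x j * x j) ^ 2 ∂(gaussianVec S hS)) :=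
      integral_mul_le_sqrt_mul_sqrt (memLp_eval_mul_eval_gaussianVec hS i i)
        (memLp_eval_mul_eval_gaussianVec hS j j) (fun x => mul_self_nonneg _)
        (fun x => mul_self_nonneg _)
    _ = 3 * (S i i * S j j) := by
      rw [hsq, hsq, mul_mul_mul_comm, mul_self_sqrt (by norm_num)]

theorem integral_vecNorm_pow_four_gaussianVec_le :
    ∫ x, vecNorm x ^ 4 ∂(gaussianVec S hS) ≤ 3 * S.trace ^ 2 := by
  have hint (i j : Fin d) :
      Integrable (fun x : Fin d → ℝ => (x i * x j) ^ 2) (gaussianVec S hS) :=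
    (memLp_eval_mul_eval_gaussianVec hS i j).integrable_sq
  simp_rw [vecNorm_pow_four]
  rw [integral_finsetSum _ fun i _ => integrable_finsetSum _ fun j _ => hint i j]
  calc ∑ i, ∫ x, ∑ j, (x i * x j) ^ 2 ∂(gaussianVec S hS)
      = ∑ i, ∑ j, ∫ x, (x i * x j) ^ 2 ∂(gaussianVec S hS) := by
        simp_rw [integral_finsetSum _ fun j _ => hint _ j]
    _ ≤ ∑ i, ∑ j, 3 * (S i i * S j j) := by
        gcongr with i _ j _
        exact integral_sq_eval_mul_eval_gaussianVec_le hS i j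
    _ = 3 * S.trace ^ 2 := by
        rw [Matrix.trace, sq, Finset.sum_mul_sum, Finset.mul_sum]
        simp_rw [Finset.mul_sum, Matrix.diag]

end GaussianVec

theorem sampleCov_sub_apply {d n : ℕ} (hn : n ≠ 0) (x : Fin n → Fin d → ℝ)
    (S : Matrix (Fin d) (Fin d) ℝ) (i j : Fin d) :
    (sampleCov x - S) i j = (n : ℝ)⁻¹ * (∑ k, x k i * x k j - n * S i j) := by
  simp [sampleCov, Matrix.sum_apply, Matrix.vecMulVec_apply]
  field_simp

theorem sum_variance_mul_le_integral_vecNorm_pow_four {d : ℕ} {ν : Measure (Fin d → ℝ)}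
    [IsProbabilityMeasure ν] (hmom : ∀ i j, MemLp (fun x => x i * x j) 2 ν) :
    ∑ i, ∑ j, Var[fun x => x i * x j; ν] ≤ ∫ x, vecNorm x ^ 4 ∂ν := by
  simp_rw [vecNorm_pow_four]
  rw [integral_finsetSum _ fun i _ => integrable_finsetSum _ fun j _ => (hmom i j).integrable_sq]
  gcongr with i _
  rw [integral_finsetSum _ fun j _ => (hmom i j).integrable_sq]
  gcongr with j _
  exact variance_le_expectation_sq (hmom i j).aestronglyMeasurable

section SampleCovariance

variable {Ω : Type*} [MeasurableSpace Ω] {μ : Measure Ω}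

theorem integral_sq_sum_sub_eq_mul_variance [IsProbabilityMeasure μ] {n : ℕ}
    {Y : Fin n → Ω → ℝ} {m v : ℝ} (hY : ∀ k, MemLp (Y k) 2 μ)
    (hind : Pairwise fun k l => IndepFun (Y k) (Y l) μ)
    (hmean : ∀ k, μ[Y k] = m) (hvar : ∀ k, Var[Y k; μ] = v) :
    ∫ ω, (∑ k, Y k ω - n * m) ^ 2 ∂μ = n * v := by
  have hsum : μ[∑ k, Y k] = n * m := by
    simp [integral_finsetSum _ fun k _ => (hY k).integrable one_le_two, hmean]
  calc ∫ ω, (∑ k, Y k ω - n * m) ^ 2 ∂μ = Var[∑ k, Y k; μ] := by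
        rw [variance_eq_integral (memLp_finsetSum' _ fun k _ => hY k).aemeasurable, hsum]
        simp
    _ = n * v := by
        rw [IndepFun.variance_sum (fun k _ => hY k) fun k _ l _ hkl => hind hkl]
        simp [hvar]

variable {d n : ℕ} {X : Fin n → Ω → Fin d → ℝ} {ν : Measure (Fin d → ℝ)}
  {S : Matrix (Fin d) (Fin d) ℝ}

theorem memLp_sampleCov_sub_apply [IsFiniteMeasure μ] (hn : n ≠ 0) (hX : ∀ k, Measurable (X k))
    (hlaw : ∀ k, μ.map (X k) = ν) {i j : Fin d} (hmom : MemLp (fun x => x i * x j) 2 ν) :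
    MemLp (fun ω => (sampleCov (fun k => X k ω) - S) i j) 2 μ := by
  simp_rw [sampleCov_sub_apply hn]
  exact ((memLp_finsetSum _ fun k _ => hmom.comp_measurePreserving ⟨hX k, hlaw k⟩).sub
    (memLp_const _)).const_mul _

theorem integral_sq_sampleCov_sub_apply [IsProbabilityMeasure μ] (hn : n ≠ 0)
    (hX : ∀ k, Measurable (X k)) (hind : iIndepFun X μ) (hlaw : ∀ k, μ.map (X k) = ν)
    {i j : Fin d} (hmom : MemLp (fun x => x i * x j) 2 ν)
    (hmean : ∫ x, x i * x j ∂ν = S i j) :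
    ∫ ω, ((sampleCov (fun k => X k ω) - S) i j) ^ 2 ∂μ =
      Var[fun x => x i * x j; ν] / n := by
  have hg : Measurable fun x : Fin d → ℝ => x i * x j := by fun_prop
  have hY (k : Fin n) : MemLp (fun ω => X k ω i * X k ω j) 2 μ :=
    hmom.comp_measurePreserving ⟨hX k, hlaw k⟩
  have hind' : Pairwise fun k l => IndepFun (fun ω => X k ω i * X k ω j)
      (fun ω => X l ω i * X l ω j) μ := fun k l hkl => (hind.indepFun hkl).comp hg hg
  have hmeanY (k : Fin n) : ∫ ω, X k ω i * X k ω j ∂μ = S i j := by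
    rw [← hmean, ← hlaw k, integral_map (hX k).aemeasurable hg.aestronglyMeasurable]
  have hvarY (k : Fin n) :
      Var[fun ω => X k ω i * X k ω j; μ] = Var[fun x => x i * x j; ν] := by
    rw [← hlaw k, variance_map hg.aemeasurable (hX k).aemeasurable]
    rfl
  simp_rw [sampleCov_sub_apply hn, mul_pow, integral_const_mul]
  rw [integral_sq_sum_sub_eq_mul_variance hY hind' hmeanY hvarY]
  field_simp

theorem integral_frobenius_sq_sampleCov_sub [IsProbabilityMeasure μ] (hn : n ≠ 0)
    (hX : ∀ k, Measurable (X k)) (hind : iIndepFun X μ) (hlaw : ∀ k, μ.map (X k) = ν)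
    (hmom : ∀ i j, MemLp (fun x => x i * x j) 2 ν)
    (hmean : ∀ i j, ∫ x, x i * x j ∂ν = S i j) :
    ∫ ω, ∑ i, ∑ j, ((sampleCov (fun k => X k ω) - S) i j) ^ 2 ∂μ =
      (∑ i, ∑ j, Var[fun x => x i * x j; ν]) / n := by
  have hint i j : Integrable (fun ω => ((sampleCov (fun k => X k ω) - S) i j) ^ 2) μ :=
    (memLp_sampleCov_sub_apply hn hX hlaw (hmom i j)).integrable_sq
  rw [integral_finsetSum _ fun i _ => integrable_finsetSum _ fun j _ => hint i j, Finset.sum_div]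
  refine Finset.sum_congr rfl fun i _ => ?_
  rw [integral_finsetSum _ fun j _ => hint i j, Finset.sum_div]
  exact Finset.sum_congr rfl fun j _ =>
    integral_sq_sampleCov_sub_apply hn hX hind hlaw (hmom i j) (hmean i j)

end SampleCovariance

theorem matOpNorm_mul_effRank {d : ℕ} (S : Matrix (Fin d) (Fin d) ℝ) :
    matOpNorm S * effRank S = S.trace := by
  by_cases h : matOpNorm S = 0
  · have : S = 0 := by simpa [matOpNorm] using h
    rw [h, zero_mul, this, Matrix.trace_zero]
  · exact mul_div_cancel₀ _ h

/-- For i.i.d. centered Gaussian vectors `X_1,…,X_n` with covariance `S` in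
`ℝ^d` and sample covariance `Σ̂_n`: `E‖Σ̂_n − S‖₂² ≤ E‖X‖⁴/n`, and consequently
`(E‖Σ̂_n − S‖₂²)^{1/2} ≤ C ‖S‖ r(S)/√n` for a universal constant `C`,
where `r(S) = tr(S)/‖S‖` is the effective rank. -/
theorem expected_frobenius_sq_sampleCov :
    ∃ C : ℝ, 0 < C ∧
      ∀ (d n : ℕ) (hn : 0 < n),
        ∀ (S : Matrix (Fin d) (Fin d) ℝ) (hS : S.PosSemidef),
          ∀ (Ω : Type) (mΩ : MeasurableSpace Ω) (μ : Measure Ω), IsProbabilityMeasure μ →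
            ∀ X : Fin n → Ω → (Fin d → ℝ), (∀ i, Measurable (X i)) →
              iIndepFun X μ →
              (∀ i, Measure.map (X i) μ = gaussianVec S hS) →
              (∫ ω, ∑ i, ∑ j, ((sampleCov (fun k => X k ω) - S) i j) ^ 2 ∂μ ≤
                  (∫ ω, vecNorm (X ⟨0, hn⟩ ω) ^ 4 ∂μ) / n) ∧
              Real.sqrt (∫ ω, ∑ i, ∑ j, ((sampleCov (fun k => X k ω) - S) i j) ^ 2 ∂μ) ≤
                C * matOpNorm S * effRank S / Real.sqrt n := by
  refine ⟨√3, by positivity, ?_⟩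
  intro d n hn S hS Ω mΩ μ hμ X hXm hind hlaw
  have hmom i j := memLp_eval_mul_eval_gaussianVec hS i j
  have hfourth : ∫ ω, vecNorm (X ⟨0, hn⟩ ω) ^ 4 ∂μ =
      ∫ x, vecNorm x ^ 4 ∂(gaussianVec S hS) := by
    rw [← hlaw ⟨0, hn⟩, integral_map (hXm _).aemeasurable
      (measurable_vecNorm.pow_const 4).aestronglyMeasurable]
  have hfirst : ∫ ω, ∑ i, ∑ j, ((sampleCov (fun k => X k ω) - S) i j) ^ 2 ∂μ ≤
      (∫ ω, vecNorm (X ⟨0, hn⟩ ω) ^ 4 ∂μ) / n := by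
    rw [integral_frobenius_sq_sampleCov_sub hn.ne' hXm hind hlaw hmom
      (integral_eval_mul_eval_gaussianVec hS), hfourth]
    gcongr
    exact sum_variance_mul_le_integral_vecNorm_pow_four hmom
  have htrace : ∫ ω, vecNorm (X ⟨0, hn⟩ ω) ^ 4 ∂μ ≤ 3 * S.trace ^ 2 :=
    hfourth ▸ integral_vecNorm_pow_four_gaussianVec_le hS
  refine ⟨hfirst, ?_⟩
  calc √(∫ ω, ∑ i, ∑ j, ((sampleCov (fun k => X k ω) - S) i j) ^ 2 ∂μ)
      ≤ √(3 * S.trace ^ 2 / n) := by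
        gcongr
        exact hfirst.trans (by gcongr)
    _ = √3 * matOpNorm S * effRank S / √n := by
        rw [mul_assoc, matOpNorm_mul_effRank, sqrt_div' _ (Nat.cast_nonneg n),
          sqrt_mul' _ (sq_nonneg _), sqrt_sq hS.trace_nonneg]
end
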